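/- arXiv:1902.00198 — 2 statements merged into one kernel-verified Lean document; each statement's English description precedes it below -/
import Mathlib

section
/- (Helical joint D-H parameterization, Lemma 1) For any normalized helical twist ξ̄ = (ω, v) with ‖ω‖ = 1 and pitch h = ωᵀv, there exist parameters θ, d, α, a such that for all q, exp(ξ̂̄ q) = H · R_Z(q) · T_Z(hq) · H⁻¹, where H = R_Z(θ)T_Z(d)R_X(α)T_X(a). -/
open Matrix Real

noncomputable section

/-- Skew-symmetric matrix of a 3-vector. -/
def skew (w : Fin 3 → ℝ) : Matrix (Fin 3) (Fin 3) ℝ :=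
  !![0, -w 2, w 1; w 2, 0, -w 0; -w 1, w 0, 0]

/-- 4×4 twist matrix of twist coordinates (ω, v). -/
def twistM (w v : Fin 3 → ℝ) : Matrix (Fin 4) (Fin 4) ℝ :=
  !![0, -w 2, w 1, v 0;
     w 2, 0, -w 0, v 1;
     -w 1, w 0, 0, v 2;
     0, 0, 0, 0]

/-- Homogeneous transformation [[R,t],[0,1]]. -/
def homog (R : Matrix (Fin 3) (Fin 3) ℝ) (t : Fin 3 → ℝ) : Matrix (Fin 4) (Fin 4) ℝ :=
  !![R 0 0, R 0 1, R 0 2, t 0;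
     R 1 0, R 1 1, R 1 2, t 1;
     R 2 0, R 2 1, R 2 2, t 2;
     0, 0, 0, 1]

def isSO3 (R : Matrix (Fin 3) (Fin 3) ℝ) : Prop := R * Rᵀ = 1 ∧ R.det = 1

def isSE3 (H : Matrix (Fin 4) (Fin 4) ℝ) : Prop :=
  ∃ R t, isSO3 R ∧ H = homog R t

def isTwist (X : Matrix (Fin 4) (Fin 4) ℝ) : Prop := ∃ w v, X = twistM w v

def RZ (θ : ℝ) : Matrix (Fin 4) (Fin 4) ℝ :=
  homog !![Real.cos θ, -Real.sin θ, 0; Real.sin θ, Real.cos θ, 0; 0, 0, 1] ![0, 0, 0]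

def TZ (d : ℝ) : Matrix (Fin 4) (Fin 4) ℝ := homog 1 ![0, 0, d]

def RX (α : ℝ) : Matrix (Fin 4) (Fin 4) ℝ :=
  homog !![1, 0, 0; 0, Real.cos α, -Real.sin α; 0, Real.sin α, Real.cos α] ![0, 0, 0]

def TX (a : ℝ) : Matrix (Fin 4) (Fin 4) ℝ := homog 1 ![a, 0, 0]

/-! A rigid motion `H = homog R p` conjugates `ξ̂` into the standard helical twist about the
`z`-axis with the same pitch exactly when `R e_z = ω` and `p` lies on the screw axis,
`ω × p = h ω - v`; then `exp (q • ξ̂) = H * exp (q • ξ̂_z) * H⁻¹`. In D-H form, `R e_z` is the unit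
vector with spherical angles `(θ, α)` and `p = (a cos θ, a sin θ, d)`, a point where the axis meets
the plane through the `z`-axis at angle `θ`; such a point exists unless the axis is vertical, and
then `θ` is free and can be chosen to make it exist. The standard twist is the image of
`(q i, h q ε)` under a block embedding of `ℂ × ℝ[ε]`, where
`exp (q i, h q ε) = (e^{iq}, 1 + h q ε)`. -/

theorem homog_mul (R R' : Matrix (Fin 3) (Fin 3) ℝ) (t t' : Fin 3 → ℝ) :
    homog R t * homog R' t' = homog (R * R') (R *ᵥ t' + t) := by
  ext i j
  fin_cases i <;> fin_cases j <;>
    simp [homog, Matrix.mul_apply, Fin.sum_univ_four, Fin.sum_univ_three, Matrix.mulVec,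
      dotProduct]

theorem homog_one_zero : homog 1 0 = 1 := by
  ext i j
  fin_cases i <;> fin_cases j <;> simp [homog]

theorem isUnit_homog {R : Matrix (Fin 3) (Fin 3) ℝ} (hR : IsUnit R) (t : Fin 3 → ℝ) :
    IsUnit (homog R t) := by
  have hdet : IsUnit R.det := (Matrix.isUnit_iff_isUnit_det R).mp hR
  have hinv : homog R t * homog R⁻¹ (-(R⁻¹ *ᵥ t)) = 1 := by
    rw [homog_mul, Matrix.mul_nonsing_inv _ hdet, Matrix.mulVec_neg, Matrix.mulVec_mulVec,
      Matrix.mul_nonsing_inv _ hdet, Matrix.one_mulVec, neg_add_cancel, homog_one_zero]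
  exact (Matrix.isUnit_iff_isUnit_det _).mpr (Matrix.isUnit_det_of_right_inverse hinv)

theorem isUnit_RZ (θ : ℝ) : IsUnit (RZ θ) :=
  isUnit_homog (by simp [Matrix.isUnit_iff_isUnit_det, Matrix.det_fin_three, ← sq]) _

theorem isUnit_RX (α : ℝ) : IsUnit (RX α) :=
  isUnit_homog (by simp [Matrix.isUnit_iff_isUnit_det, Matrix.det_fin_three, ← sq]) _

theorem isUnit_TZ (d : ℝ) : IsUnit (TZ d) := isUnit_homog isUnit_one _

theorem isUnit_TX (a : ℝ) : IsUnit (TX a) := isUnit_homog isUnit_one _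

theorem isUnit_dh (θ d α a : ℝ) : IsUnit (RZ θ * TZ d * RX α * TX a) :=
  (((isUnit_RZ θ).mul (isUnit_TZ d)).mul (isUnit_RX α)).mul (isUnit_TX a)

section HelixExp

-- `NormedSpace.map_exp` needs a norm on the target; the exponential itself does not depend on it.
attribute [local instance] Matrix.linftyOpNormedRing Matrix.linftyOpNormedAlgebra

def helixRep : ℂ × DualNumber ℝ →ₐ[ℝ] Matrix (Fin 4) (Fin 4) ℝ where
  toFun p := !![p.1.re, -p.1.im, 0, 0;
                p.1.im, p.1.re, 0, 0;
                0, 0, p.2.fst, p.2.snd;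
                0, 0, 0, p.2.fst]
  map_one' := by ext i j; fin_cases i <;> fin_cases j <;> simp
  map_mul' p q := by
    ext i j
    fin_cases i <;> fin_cases j <;> simp [Matrix.mul_apply, Fin.sum_univ_four] <;> ring
  map_zero' := by ext i j; fin_cases i <;> fin_cases j <;> simp
  map_add' p q := by ext i j; fin_cases i <;> fin_cases j <;> simp; ring
  commutes' r := by
    ext i j
    fin_cases i <;> fin_cases j <;>
      simp [Matrix.algebraMap_eq_diagonal, TrivSqZeroExt.algebraMap_eq_inl]

theorem smul_twistM_ez (h q : ℝ) :
    q • twistM ![0, 0, 1] ![0, 0, h] =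
      helixRep ((q : ℂ) * Complex.I, (h * q) • DualNumber.eps) := by
  ext i j; fin_cases i <;> fin_cases j <;> simp [twistM, helixRep]; ring

theorem exp_smul_twistM_ez (h q : ℝ) :
    NormedSpace.exp (q • twistM ![0, 0, 1] ![0, 0, h]) = RZ q * TZ (h * q) := by
  have : FiniteDimensional ℝ (DualNumber ℝ) := inferInstanceAs (FiniteDimensional ℝ (ℝ × ℝ))
  rw [smul_twistM_ez]
  refine (NormedSpace.map_exp helixRep
    helixRep.toLinearMap.continuous_of_finiteDimensional _).symm.trans ?_
  have hexp : NormedSpace.exp ((q : ℂ) * Complex.I, (h * q) • DualNumber.eps) =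
      (Complex.exp (q * Complex.I), (1 + (h * q) • DualNumber.eps : DualNumber ℝ)) := by
    ext1
    · simp [← Complex.exp_eq_exp_ℂ]
    · simp
  rw [hexp, Complex.exp_mul_I]
  ext i j
  fin_cases i <;> fin_cases j <;>
    simp [helixRep, RZ, TZ, homog, ← Complex.ofReal_cos, ← Complex.ofReal_sin]

end HelixExp

theorem dh_eq_homog (θ d α a : ℝ) : RZ θ * TZ d * RX α * TX a =
    homog !![cos θ, -(sin θ * cos α), sin θ * sin α;
             sin θ, cos θ * cos α, -(cos θ * sin α);
             0, sin α, cos α] ![a * cos θ, a * sin θ, d] := by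
  simp only [RZ, TZ, RX, TX, homog_mul]
  congr 1
  · ext i j; fin_cases i <;> fin_cases j <;> simp [Matrix.mul_apply, Fin.sum_univ_three]
  · ext i; fin_cases i <;> simp [Matrix.vecHead, Matrix.vecTail]

theorem twistM_mul_dh {ω v : Fin 3 → ℝ} {θ d α a h : ℝ}
    (hω : ω = ![sin θ * sin α, -(cos θ * sin α), cos α])
    (hv : ω ⨯₃ ![a * cos θ, a * sin θ, d] = h • ω - v) :
    twistM ω v * (RZ θ * TZ d * RX α * TX a) =
      (RZ θ * TZ d * RX α * TX a) * twistM ![0, 0, 1] ![0, 0, h] := by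
  rw [eq_sub_iff_add_eq, ← eq_sub_iff_add_eq'] at hv
  subst hv hω
  rw [dh_eq_homog]
  ext i j
  fin_cases i <;> fin_cases j <;>
    simp [twistM, homog, Matrix.mul_apply, Fin.sum_univ_four, cross_apply] <;>
    grind [sin_sq_add_cos_sq]

theorem exists_polar (x y : ℝ) :
    ∃ θ, x = √(x ^ 2 + y ^ 2) * cos θ ∧ y = √(x ^ 2 + y ^ 2) * sin θ := by
  have hz : ‖(⟨x, y⟩ : ℂ)‖ = √(x ^ 2 + y ^ 2) := by
    rw [Complex.norm_def, Complex.normSq_mk, sq, sq]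
  exact ⟨Complex.arg ⟨x, y⟩, by rw [← hz, Complex.norm_mul_cos_arg],
    by rw [← hz, Complex.norm_mul_sin_arg]⟩

theorem exists_spherical {ω : Fin 3 → ℝ} (hω : ω ⬝ᵥ ω = 1) :
    ∃ θ α, ω = ![sin θ * sin α, -(cos θ * sin α), cos α] := by
  obtain ⟨θ, hθc, hθs⟩ := exists_polar (-ω 1) (ω 0)
  set r := √((-ω 1) ^ 2 + ω 0 ^ 2)
  obtain ⟨α, hαc, hαs⟩ := exists_polar (ω 2) r
  have hunit : √(ω 2 ^ 2 + r ^ 2) = 1 := by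
    rw [Real.sq_sqrt (by positivity), Real.sqrt_eq_one]
    simp only [dotProduct, Fin.sum_univ_three] at hω
    linear_combination hω
  rw [hunit, one_mul] at hαc hαs
  refine ⟨θ, α, ?_⟩
  ext i; fin_cases i <;> simp
  · linear_combination hθs + sin θ * hαs
  · linear_combination -hθc - cos θ * hαs
  · exact hαc

theorem exists_dh_params {ω u : Fin 3 → ℝ} (hω : ω ⬝ᵥ ω = 1) (hu : ω ⬝ᵥ u = 0) :
    ∃ θ α a d, ω = ![sin θ * sin α, -(cos θ * sin α), cos α] ∧
      ω ⨯₃ ![a * cos θ, a * sin θ, d] = u := by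
  obtain ⟨θ, α, rfl⟩ := exists_spherical hω
  simp only [dotProduct, Fin.sum_univ_three, cons_val] at hu
  by_cases hα : sin α = 0
  · -- `ω = ± e_z` does not constrain `θ`: take it to be the polar angle of
    -- `u × ω`, the point of the axis nearest the origin.
    have hc2 : cos α ^ 2 = 1 := by simpa [hα] using sin_sq_add_cos_sq α
    rw [hα] at hu
    obtain ⟨θ', hc, hs⟩ := exists_polar (cos α * u 1) (-(cos α * u 0))
    generalize √((cos α * u 1) ^ 2 + (-(cos α * u 0)) ^ 2) = a at hc hs
    refine ⟨θ', α, a, 0, by simp [hα], ?_⟩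
    ext i; fin_cases i <;> simp [cross_apply, hα]
    · linear_combination cos α * hs + u 0 * hc2
    · linear_combination -cos α * hc + u 1 * hc2
    · linear_combination -cos α * hu + u 2 * hc2
  · -- The third coordinate of `ω × p` is `a sin α`; the first two then fix `d`.
    refine ⟨θ, α, u 2 / sin α, -(u 0 * cos θ + u 1 * sin θ) / sin α, rfl, ?_⟩
    ext i; fin_cases i <;> simp [cross_apply] <;> field_simp
    · linear_combination -sin θ * hu + sin α * u 0 * sin_sq_add_cos_sq θ
    · linear_combination cos θ * hu + sin α * u 1 * sin_sq_add_cos_sq θ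
    · linear_combination u 2 * sin_sq_add_cos_sq θ

/-- Lemma 1: D-H parameterization of a helical joint twist. -/
theorem helical_joint_DH (ω v : Fin 3 → ℝ)
    (hω : Real.sqrt (ω 0 ^ 2 + ω 1 ^ 2 + ω 2 ^ 2) = 1)
    (h : ℝ) (hpitch : h = ω ⬝ᵥ v) :
    ∃ θ d α a : ℝ,
      ∀ q : ℝ,
        NormedSpace.exp (q • twistM ω v) =
          (RZ θ * TZ d * RX α * TX a) * (RZ q * TZ (h * q)) *
            (RZ θ * TZ d * RX α * TX a)⁻¹ := by
  have hunit : ω ⬝ᵥ ω = 1 := by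
    rw [Real.sqrt_eq_one] at hω
    simpa [dotProduct, Fin.sum_univ_three, sq] using hω
  have haxis : ω ⬝ᵥ (h • ω - v) = 0 := by
    rw [dotProduct_sub, dotProduct_smul, hunit, hpitch, smul_eq_mul, mul_one, sub_self]
  obtain ⟨θ, α, a, d, hsph, hline⟩ := exists_dh_params hunit haxis
  refine ⟨θ, d, α, a, fun q => ?_⟩
  set H := RZ θ * TZ d * RX α * TX a
  have hH : IsUnit H := isUnit_dh θ d α a
  have hconj : q • twistM ω v = H * (q • twistM ![0, 0, 1] ![0, 0, h]) * H⁻¹ := by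
    rw [Matrix.mul_smul, Matrix.smul_mul, ← twistM_mul_dh hsph hline,
      Matrix.mul_nonsing_inv_cancel_right _ _ ((Matrix.isUnit_iff_isUnit_det H).mp hH)]
  rw [hconj, Matrix.exp_conj H _ hH, exp_smul_twistM_ez]
end
end

section
/- For a pure rotation twist about an axis through point p: if ξ̄ = (ω̄, p × ω̄) with ‖ω̄‖ = 1, then exp(ξ̂̄ q) = [[e^{ω̂̄ q}, (I − e^{ω̂̄ q})p],[0, 1]], i.e., the exponential fixes the point p. -/
open Matrix Real

noncomputable section

/-!
The twist with `v = p × ω = -ω̂ p` is the pure rotation `diag(ω̂, 0)` conjugated by the translation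
`T_p = [[I, p], [0, 1]]`. The exponential commutes with conjugation and with assembling diagonal
blocks, so `exp(q ξ̂) = T_p diag(e^{q ω̂}, 1) T_p⁻¹ = [[e^{q ω̂}, (I - e^{q ω̂}) p], [0, 1]]`.
-/

namespace Matrix

section Blocks

variable {m n α : Type*} [Fintype m] [Fintype n] [DecidableEq m] [DecidableEq n]

variable (m n α) in
@[simps]
def fromBlocksRingHom [Semiring α] :
    Matrix m m α × Matrix n n α →+* Matrix (m ⊕ n) (m ⊕ n) α where
  toFun x := fromBlocks x.1 0 0 x.2
  map_one' := fromBlocks_one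
  map_mul' x y := by simp [fromBlocks_multiply]
  map_zero' := fromBlocks_zero
  map_add' x y := by simp [fromBlocks_add]

def blockUnitriangularUnit [Ring α] (B : Matrix m n α) :
    (Matrix (m ⊕ n) (m ⊕ n) α)ˣ where
  val := fromBlocks 1 B 0 1
  inv := fromBlocks 1 (-B) 0 1
  val_inv := by simp [fromBlocks_multiply]
  inv_val := by simp [fromBlocks_multiply]

theorem blockUnitriangularUnit_conj [Ring α] (B : Matrix m n α) (A : Matrix m m α)
    (D : Matrix n n α) :
    (blockUnitriangularUnit B : Matrix (m ⊕ n) (m ⊕ n) α) * fromBlocks A 0 0 D *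
        (↑(blockUnitriangularUnit B)⁻¹ : Matrix (m ⊕ n) (m ⊕ n) α) =
      fromBlocks A (B * D - A * B) 0 D := by
  simp [blockUnitriangularUnit, fromBlocks_multiply, sub_eq_neg_add]

end Blocks

section Exponential

open scoped Norms.Operator

variable {m n 𝕂 : Type*} [Fintype m] [Fintype n] [DecidableEq m] [DecidableEq n] [RCLike 𝕂]

theorem exp_fromBlocks_zero_zero (A : Matrix m m 𝕂) (D : Matrix n n 𝕂) :
    NormedSpace.exp (fromBlocks A 0 0 D) =
      fromBlocks (NormedSpace.exp A) 0 0 (NormedSpace.exp D) := by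
  have hcont : Continuous (fromBlocksRingHom m n 𝕂) :=
    continuous_fst.matrix_fromBlocks continuous_const continuous_const continuous_snd
  -- completeness for the operator-norm uniformity, which instance search does not reach
  have : @CompleteSpace (Matrix m m 𝕂 × Matrix n n 𝕂) PseudoMetricSpace.toUniformSpace :=
    FiniteDimensional.complete 𝕂 _
  have h := (NormedSpace.map_exp _ hcont (A, D)).symm
  simp only [fromBlocksRingHom_apply, Prod.fst_exp, Prod.snd_exp] at h
  exact h

theorem exp_reindex (e : m ≃ n) (A : Matrix m m 𝕂) :
    NormedSpace.exp (reindex e e A) = reindex e e (NormedSpace.exp A) :=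
  (NormedSpace.map_exp (reindexAlgEquiv ℚ 𝕂 e) (continuous_id.matrix_reindex e e) A).symm

end Exponential

end Matrix

abbrev fin3SumFin1Equiv : Fin 3 ⊕ Fin 1 ≃ Fin 4 := finSumFinEquiv

abbrev translationUnit (p : Fin 3 → ℝ) : (Matrix (Fin 3 ⊕ Fin 1) (Fin 3 ⊕ Fin 1) ℝ)ˣ :=
  blockUnitriangularUnit (replicateCol (Fin 1) p)

theorem skew_mulVec (w v : Fin 3 → ℝ) : skew w *ᵥ v = w ⨯₃ v := by
  ext i; fin_cases i <;> simp [skew, cross_apply, mulVec, dotProduct, Fin.sum_univ_three] <;> ring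

theorem homog_eq_reindex (R : Matrix (Fin 3) (Fin 3) ℝ) (t : Fin 3 → ℝ) :
    homog R t =
      reindex fin3SumFin1Equiv fin3SumFin1Equiv (fromBlocks R (replicateCol (Fin 1) t) 0 1) := by
  ext i j; fin_cases i <;> fin_cases j <;> rfl

theorem twistM_eq_reindex (w v : Fin 3 → ℝ) :
    twistM w v =
      reindex fin3SumFin1Equiv fin3SumFin1Equiv
        (fromBlocks (skew w) (replicateCol (Fin 1) v) 0 0) := by
  ext i j; fin_cases i <;> fin_cases j <;> rfl

theorem smul_twistM_cross_eq_conj (w p : Fin 3 → ℝ) (q : ℝ) :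
    q • twistM w (p ⨯₃ w) = reindex fin3SumFin1Equiv fin3SumFin1Equiv
      ((translationUnit p : Matrix (Fin 3 ⊕ Fin 1) (Fin 3 ⊕ Fin 1) ℝ) *
        fromBlocks (q • skew w) 0 0 0 *
        (↑(translationUnit p)⁻¹ : Matrix (Fin 3 ⊕ Fin 1) (Fin 3 ⊕ Fin 1) ℝ)) := by
  have hcol : replicateCol (Fin 1) p * (0 : Matrix (Fin 1) (Fin 1) ℝ) -
      q • skew w * replicateCol (Fin 1) p = q • replicateCol (Fin 1) (p ⨯₃ w) := by
    rw [Matrix.mul_zero, zero_sub, ← replicateCol_mulVec, smul_mulVec, skew_mulVec]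
    ext i j
    simp only [replicateCol_smul, Matrix.neg_apply, Matrix.smul_apply, replicateCol_apply,
      smul_eq_mul, ← cross_anticomm w p, Pi.neg_apply, mul_neg]
  rw [blockUnitriangularUnit_conj, twistM_eq_reindex, hcol, ← coe_reindexLinearEquiv ℝ ℝ,
    ← map_smul, fromBlocks_smul, smul_zero, smul_zero]

theorem homog_eq_conj (R : Matrix (Fin 3) (Fin 3) ℝ) (p : Fin 3 → ℝ) :
    homog R ((1 - R) *ᵥ p) = reindex fin3SumFin1Equiv fin3SumFin1Equiv
      ((translationUnit p : Matrix (Fin 3 ⊕ Fin 1) (Fin 3 ⊕ Fin 1) ℝ) *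
        fromBlocks R 0 0 1 *
        (↑(translationUnit p)⁻¹ : Matrix (Fin 3 ⊕ Fin 1) (Fin 3 ⊕ Fin 1) ℝ)) := by
  rw [blockUnitriangularUnit_conj, homog_eq_reindex, Matrix.mul_one, ← replicateCol_mulVec,
    sub_mulVec, one_mulVec]
  rfl

open scoped Matrix in
theorem exp_rotation_about_point_general (ω p : Fin 3 → ℝ) (q : ℝ) :
    NormedSpace.exp (q • twistM ω (p ⨯₃ ω)) =
      homog (NormedSpace.exp (q • skew ω))
        ((1 - NormedSpace.exp (q • skew ω)) *ᵥ p) := by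
  rw [smul_twistM_cross_eq_conj, exp_reindex, Matrix.exp_units_conj, exp_fromBlocks_zero_zero,
    NormedSpace.exp_zero, homog_eq_conj]

open scoped Matrix in
/-- exponential of a pure rotation twist about an axis through p. -/
theorem exp_rotation_about_point (ω p : Fin 3 → ℝ)
    (hω : Real.sqrt (ω 0 ^ 2 + ω 1 ^ 2 + ω 2 ^ 2) = 1) (q : ℝ) :
    NormedSpace.exp (q • twistM ω (p ⨯₃ ω)) =
      homog (NormedSpace.exp (q • skew ω))
        ((1 - NormedSpace.exp (q • skew ω)) *ᵥ p) :=
  exp_rotation_about_point_general ω p q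
end
end
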